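/- arXiv:1005.1476 — 5 statements merged into one kernel-verified Lean document; each statement's English description precedes it below -/
import Mathlib

section
/- For every shape ξ>0 and scale β>0, the Fisher information of the GPD model satisfies ∫₀^∞ Λ_{ξ,β}(x)·Λ_{ξ,β}(x)ᵀ · f_{ξ,β}(x) dx = (1/((2ξ+1)(ξ+1))) · [[2, 1/β],[1/β, (ξ+1)/β²]], and in particular this integral is finite. -/
open MeasureTheory Real Set

/-- Density of the generalized Pareto distribution GPD(ξ,β), threshold μ = 0. -/
noncomputable def gpdDensity (ξ β x : ℝ) : ℝ :=
  if x < 0 then 0 else (1 / β) * (1 + ξ * x / β) ^ (-1 / ξ - 1)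

/-- Scores (L₂-derivative) of the GPD model, with z = x/β. -/
noncomputable def gpdScores (ξ β x : ℝ) : Fin 2 → ℝ :=
  ![1 / ξ ^ 2 * Real.log (1 + ξ * (x / β)) - (ξ + 1) / ξ * ((x / β) / (1 + ξ * (x / β))),
    -(1 / β) + (ξ + 1) / β * ((x / β) / (1 + ξ * (x / β)))]

/-- Fisher information matrix of the GPD model. -/
noncomputable def fisherGPD (ξ β : ℝ) : Matrix (Fin 2) (Fin 2) ℝ :=
  (1 / ((2 * ξ + 1) * (ξ + 1))) • !![2, 1 / β; 1 / β, (ξ + 1) / β ^ 2]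

/-! If `Y` is standard exponential, then `X = β (exp (ξ Y) - 1) / ξ` is GPD(ξ,β): under this
substitution `log (1 + ξ X / β) = ξ Y`, `(X / β) / (1 + ξ X / β) = (1 - exp (-ξ Y)) / ξ` and
`f(x) dx = exp (-y) dy`. Hence both scores are linear combinations `A v(y)` of
`v(y) = (1, y, exp (-ξ y))`, and the Fisher information is `A M Aᵀ`, where `M` is the Gram matrix
of `v` under the exponential law; its entries are the Gamma integrals
`∫₀^∞ yⁿ exp (-c y) dy = n! / c ^ (n + 1)`. -/

open Matrix
open scoped Nat

theorem integrableOn_pow_mul_exp_neg_mul (n : ℕ) {c : ℝ} (hc : 0 < c) :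
    IntegrableOn (fun y : ℝ => y ^ n * exp (-(c * y))) (Ioi 0) := by
  refine (integrableOn_rpow_mul_exp_neg_mul_rpow (s := n) (p := 1)
    (neg_one_lt_zero.trans_le n.cast_nonneg) one_pos hc).congr_fun (fun y _ => ?_) measurableSet_Ioi
  simp [rpow_natCast]

theorem integral_pow_mul_exp_neg_mul (n : ℕ) {c : ℝ} (hc : 0 < c) :
    ∫ y in Ioi (0 : ℝ), y ^ n * exp (-(c * y)) = n ! / c ^ (n + 1) := by
  have h := integral_rpow_mul_exp_neg_mul_Ioi (a := n + 1) (by positivity) hc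
  simp only [add_sub_cancel_right, rpow_natCast] at h
  rw [h, Gamma_nat_eq_factorial, ← rpow_natCast, Nat.cast_add_one, div_rpow zero_le_one hc.le,
    one_rpow]
  ring

section GramMatrix

variable {α m n : Type*} [MeasurableSpace α] {μ : Measure α} [Fintype n]

theorem mulVec_mul_mulVec_mul_eq_sum (A : Matrix m n ℝ) (v : n → ℝ) (i j : m) (w : ℝ) :
    (A *ᵥ v) i * (A *ᵥ v) j * w = ∑ k, ∑ l, A i k * A j l * (v k * v l * w) := by
  simp only [mulVec, dotProduct]
  rw [Finset.sum_mul_sum, Finset.sum_mul]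
  refine Finset.sum_congr rfl fun k _ => ?_
  rw [Finset.sum_mul]
  exact Finset.sum_congr rfl fun l _ => by ring

theorem integrable_mulVec_mul_mulVec_mul (A : Matrix m n ℝ) {v : α → n → ℝ} {w : α → ℝ}
    (hv : ∀ k l, Integrable (fun x => v x k * v x l * w x) μ) (i j : m) :
    Integrable (fun x => (A *ᵥ v x) i * (A *ᵥ v x) j * w x) μ := by
  simp only [mulVec_mul_mulVec_mul_eq_sum]
  exact integrable_finsetSum _ fun k _ => integrable_finsetSum _ fun l _ => (hv k l).const_mul _

theorem integral_mulVec_mul_mulVec_mul (A : Matrix m n ℝ) {v : α → n → ℝ} {w : α → ℝ}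
    (hv : ∀ k l, Integrable (fun x => v x k * v x l * w x) μ) (i j : m) :
    ∫ x, (A *ᵥ v x) i * (A *ᵥ v x) j * w x ∂μ =
      (A * Matrix.of (fun k l => ∫ x, v x k * v x l * w x ∂μ) * Aᵀ) i j := by
  simp only [mulVec_mul_mulVec_mul_eq_sum]
  rw [integral_finsetSum _ fun k _ => integrable_finsetSum _ fun l _ => (hv k l).const_mul _]
  simp only [integral_finsetSum _ fun l _ => (hv _ l).const_mul _, integral_const_mul, mul_apply,
    transpose_apply, of_apply, Finset.sum_mul]
  rw [Finset.sum_comm]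
  exact Finset.sum_congr rfl fun k _ => Finset.sum_congr rfl fun l _ => by ring

end GramMatrix

noncomputable def expBasis (ξ y : ℝ) : Fin 3 → ℝ := ![1, y, exp (-(ξ * y))]

noncomputable def expMoments (ξ : ℝ) : Matrix (Fin 3) (Fin 3) ℝ :=
  !![1, 1, 1 / (1 + ξ); 1, 2, 1 / (1 + ξ) ^ 2; 1 / (1 + ξ), 1 / (1 + ξ) ^ 2, 1 / (1 + 2 * ξ)]

theorem expBasis_moments {ξ : ℝ} (hξ : 0 < 1 + 2 * ξ) (k l : Fin 3) :
    IntegrableOn (fun y => expBasis ξ y k * expBasis ξ y l * exp (-y)) (Ioi 0) ∧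
      ∫ y in Ioi 0, expBasis ξ y k * expBasis ξ y l * exp (-y) = expMoments ξ k l := by
  have hξ' : 0 < 1 + ξ := by linarith
  suffices ∃ (n : ℕ) (c : ℝ), 0 < c ∧ n ! / c ^ (n + 1) = expMoments ξ k l ∧
      ∀ y, expBasis ξ y k * expBasis ξ y l * exp (-y) = y ^ n * exp (-(c * y)) by
    obtain ⟨n, c, hc, hval, hfun⟩ := this
    simp only [hfun, ← hval]
    exact ⟨integrableOn_pow_mul_exp_neg_mul n hc, integral_pow_mul_exp_neg_mul n hc⟩
  fin_cases k <;> fin_cases l <;>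
    [use 0, 1; use 1, 1; use 0, 1 + ξ; use 1, 1; use 2, 1; use 1, 1 + ξ;
      use 0, 1 + ξ; use 1, 1 + ξ; use 0, 1 + 2 * ξ] <;>
    exact ⟨by positivity, by simp [expMoments],
      fun y => by simp [expBasis, two_mul, add_mul, exp_add] <;> ring⟩

noncomputable def gpdOfExp (ξ β y : ℝ) : ℝ := β / ξ * (exp (ξ * y) - 1)

noncomputable def scoreCoeffs (ξ β : ℝ) : Matrix (Fin 2) (Fin 3) ℝ :=
  !![-(ξ + 1) / ξ ^ 2, 1 / ξ, (ξ + 1) / ξ ^ 2; 1 / (β * ξ), 0, -(ξ + 1) / (β * ξ)]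

section GPDOfExp

variable {ξ β : ℝ}

theorem one_add_mul_gpdOfExp_div (hξ : ξ ≠ 0) (hβ : β ≠ 0) (y : ℝ) :
    1 + ξ * (gpdOfExp ξ β y / β) = exp (ξ * y) := by
  unfold gpdOfExp
  field_simp
  ring

theorem hasDerivAt_gpdOfExp (hξ : ξ ≠ 0) (y : ℝ) :
    HasDerivAt (gpdOfExp ξ β) (β * exp (ξ * y)) y := by
  have h := (((hasDerivAt_id y).const_mul ξ).exp.sub_const 1).const_mul (β / ξ)
  exact h.congr_deriv (by simp only [id, mul_one]; field_simp)

theorem strictMono_gpdOfExp (hξ : 0 < ξ) (hβ : 0 < β) : StrictMono (gpdOfExp ξ β) :=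
  fun _ _ h => mul_lt_mul_of_pos_left (by gcongr) (div_pos hβ hξ)

theorem image_gpdOfExp_Ioi (hξ : 0 < ξ) (hβ : 0 < β) : gpdOfExp ξ β '' Ioi 0 = Ioi 0 := by
  ext x
  constructor
  · rintro ⟨y, hy, rfl⟩
    simpa [gpdOfExp] using strictMono_gpdOfExp hξ hβ hy
  · intro (hx : 0 < x)
    have hu : 1 < 1 + ξ * x / β := lt_add_of_pos_right 1 (by positivity)
    refine ⟨log (1 + ξ * x / β) / ξ, div_pos (log_pos hu) hξ, ?_⟩
    rw [gpdOfExp, mul_div_cancel₀ _ hξ.ne', exp_log (by linarith)]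
    field_simp
    ring

theorem gpdScores_gpdOfExp (hξ : ξ ≠ 0) (hβ : β ≠ 0) (y : ℝ) :
    gpdScores ξ β (gpdOfExp ξ β y) = scoreCoeffs ξ β *ᵥ expBasis ξ y := by
  have hz : gpdOfExp ξ β y / β / exp (ξ * y) = (1 - exp (-(ξ * y))) / ξ := by
    rw [exp_neg, gpdOfExp]
    field_simp
  rw [gpdScores, one_add_mul_gpdOfExp_div hξ hβ, log_exp, hz]
  ext i
  fin_cases i <;> simp [scoreCoeffs, expBasis, mulVec, dotProduct, Fin.sum_univ_three] <;>
    field_simp <;> ring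

theorem mul_exp_mul_gpdDensity_gpdOfExp (hξ : 0 < ξ) (hβ : 0 < β) {y : ℝ} (hy : 0 ≤ y) :
    β * exp (ξ * y) * gpdDensity ξ β (gpdOfExp ξ β y) = exp (-y) := by
  have hx : 0 ≤ gpdOfExp ξ β y := by
    simpa [gpdOfExp] using (strictMono_gpdOfExp hξ hβ).monotone hy
  rw [gpdDensity, if_neg hx.not_gt, mul_div_assoc, one_add_mul_gpdOfExp_div hξ.ne' hβ.ne',
    ← exp_mul, show ξ * y * (-1 / ξ - 1) = -y + -(ξ * y) by field_simp; ring, exp_add,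
    exp_neg (ξ * y)]
  field_simp

theorem abs_deriv_mul_gpdScores_mul_gpdDensity_gpdOfExp (hξ : 0 < ξ) (hβ : 0 < β) {y : ℝ}
    (hy : 0 ≤ y) (i j : Fin 2) :
    |β * exp (ξ * y)| * (gpdScores ξ β (gpdOfExp ξ β y) i * gpdScores ξ β (gpdOfExp ξ β y) j *
      gpdDensity ξ β (gpdOfExp ξ β y)) =
      (scoreCoeffs ξ β *ᵥ expBasis ξ y) i * (scoreCoeffs ξ β *ᵥ expBasis ξ y) j * exp (-y) := by
  rw [abs_of_pos (by positivity), gpdScores_gpdOfExp hξ.ne' hβ.ne',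
    ← mul_exp_mul_gpdDensity_gpdOfExp hξ hβ hy]
  ring

theorem scoreCoeffs_mul_expMoments_mul_transpose (hξ : 0 < ξ) (hβ : β ≠ 0) :
    scoreCoeffs ξ β * expMoments ξ * (scoreCoeffs ξ β)ᵀ = fisherGPD ξ β := by
  have h1 : 1 + ξ ≠ 0 := by positivity
  have h2 : 1 + 2 * ξ ≠ 0 := by positivity
  ext i j
  fin_cases i <;> fin_cases j <;>
    simp [scoreCoeffs, expMoments, fisherGPD, mul_apply, Fin.sum_univ_three] <;>
    field_simp <;> ring

end GPDOfExp

/-- For every ξ>0, β>0, the Fisher information integral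
∫₀^∞ Λ Λᵀ f dx (entrywise) is finite and equals
(1/((2ξ+1)(ξ+1))) · [[2, 1/β],[1/β, (ξ+1)/β²]]. -/
theorem gpd_fisher_information (ξ β : ℝ) (hξ : 0 < ξ) (hβ : 0 < β) :
    (∀ i j : Fin 2, IntegrableOn
      (fun x => gpdScores ξ β x i * gpdScores ξ β x j * gpdDensity ξ β x) (Ioi 0)) ∧
    (∀ i j : Fin 2,
      ∫ x in Ioi (0 : ℝ), gpdScores ξ β x i * gpdScores ξ β x j * gpdDensity ξ β x
        = fisherGPD ξ β i j) := by
  have hderiv (y) (_ : y ∈ Ioi (0 : ℝ)) :=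
    (hasDerivAt_gpdOfExp (β := β) hξ.ne' y).hasDerivWithinAt (s := Ioi 0)
  have hinj := (strictMono_gpdOfExp hξ hβ).injective.injOn (s := Ioi 0)
  have hpull (i j : Fin 2) : EqOn
      (fun y => |β * exp (ξ * y)| • (gpdScores ξ β (gpdOfExp ξ β y) i *
        gpdScores ξ β (gpdOfExp ξ β y) j * gpdDensity ξ β (gpdOfExp ξ β y)))
      (fun y => (scoreCoeffs ξ β *ᵥ expBasis ξ y) i * (scoreCoeffs ξ β *ᵥ expBasis ξ y) j *
        exp (-y)) (Ioi 0) :=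
    fun y hy => abs_deriv_mul_gpdScores_mul_gpdDensity_gpdOfExp hξ hβ (le_of_lt hy) i j
  have hmoments := fun k l => expBasis_moments (ξ := ξ) (by linarith) k l
  rw [← image_gpdOfExp_Ioi hξ hβ]
  refine ⟨fun i j => ?_, fun i j => ?_⟩
  · rw [integrableOn_image_iff_integrableOn_abs_deriv_smul measurableSet_Ioi hderiv hinj]
    exact IntegrableOn.congr_fun (integrable_mulVec_mul_mulVec_mul _ (fun k l => (hmoments k l).1)
      i j) (hpull i j).symm measurableSet_Ioi
  · rw [integral_image_eq_integral_abs_deriv_smul measurableSet_Ioi hderiv hinj,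
      setIntegral_congr_fun measurableSet_Ioi (hpull i j),
      integral_mulVec_mul_mulVec_mul _ (fun k l => (hmoments k l).1),
      show Matrix.of _ = expMoments ξ from Matrix.ext fun k l => (hmoments k l).2,
      scoreCoeffs_mul_expMoments_mul_transpose hξ hβ.ne']
end

section
/- For every shape ξ>0 and every x>0, with v = (1+ξx)^{−1/ξ}, the influence function of the maximum likelihood estimator in the GPD model at scale β=1 admits the representation I_{ξ,1}^{-1} · Λ_{ξ,1}(x) = ((ξ+1)/ξ²) · ( −(ξ²+ξ)·log v + (2ξ²+3ξ+1)·v^ξ − (ξ²+3ξ+1), ξ·log v − (2ξ²+3ξ+1)·v^ξ + (3ξ+1) )ᵀ. -/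
open Matrix

/-- With v = (1+ξx)^{−1/ξ}, the influence function I_{ξ,1}⁻¹ Λ_{ξ,1}(x) of the MLE at
scale β = 1 admits the representation given by ψ̃(v) from the paper. -/
theorem gpd_mle_if_representation (ξ x : ℝ) (hξ : 0 < ξ) (hx : 0 < x) :
    (fisherGPD ξ 1)⁻¹ *ᵥ gpdScores ξ 1 x
      = ((ξ + 1) / ξ ^ 2) •
        ![-(ξ ^ 2 + ξ) * Real.log ((1 + ξ * x) ^ (-1 / ξ))
            + (2 * ξ ^ 2 + 3 * ξ + 1) * ((1 + ξ * x) ^ (-1 / ξ)) ^ ξ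
            - (ξ ^ 2 + 3 * ξ + 1),
          ξ * Real.log ((1 + ξ * x) ^ (-1 / ξ))
            - (2 * ξ ^ 2 + 3 * ξ + 1) * ((1 + ξ * x) ^ (-1 / ξ)) ^ ξ
            + (3 * ξ + 1)] := by
  have h1 : (0:ℝ) < 1 + ξ * x := by nlinarith
  have h1' : (1:ℝ) + ξ * x ≠ 0 := ne_of_gt h1
  have hξ' : ξ ≠ 0 := ne_of_gt hξ
  have hξ1 : ξ + 1 ≠ 0 := by positivity
  have h2ξ1 : 2 * ξ + 1 ≠ 0 := by positivity
  have hlog : Real.log ((1 + ξ * x) ^ (-1 / ξ)) = (-1 / ξ) * Real.log (1 + ξ * x) :=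
    Real.log_rpow h1 _
  have hpow : ((1 + ξ * x) ^ (-1 / ξ)) ^ ξ = (1 + ξ * x)⁻¹ := by
    rw [← Real.rpow_mul h1.le, div_mul_cancel₀ (-1) hξ', Real.rpow_neg_one]
  have hinv : (fisherGPD ξ 1)⁻¹ = !![(ξ + 1) ^ 2, -(ξ + 1); -(ξ + 1), 2 * (ξ + 1)] := by
    apply Matrix.inv_eq_right_inv
    unfold fisherGPD
    rw [Matrix.smul_mul]
    ext i j
    fin_cases i <;> fin_cases j <;>
      simp [Matrix.mul_apply, Fin.sum_univ_two] <;> (first | (field_simp; ring1) | (right; ring1))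
  rw [hinv]
  funext i
  fin_cases i <;>
    simp [Matrix.mulVec, dotProduct, Fin.sum_univ_two, gpdScores, hlog, hpow] <;>
    (try field_simp) <;> ring
end

section
/- For every shape ξ>0, both component functions of the maximum likelihood influence function x ↦ I_{ξ,1}^{-1}·Λ_{ξ,1}(x) are unbounded on (0,∞), growing in absolute value at logarithmic rate: as x → ∞, the first component divided by log x converges to (ξ+1)²/ξ² and the second component divided by log x converges to −(ξ+1)/ξ²; in particular the supremum over x>0 of the Euclidean norm |I_{ξ,1}^{-1}·Λ_{ξ,1}(x)| is infinite. -/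
open Matrix Filter

/-- Influence function of the MLE in the GPD model at scale β = 1. -/
noncomputable def mleIF (ξ x : ℝ) : Fin 2 → ℝ := (fisherGPD ξ 1)⁻¹ *ᵥ gpdScores ξ 1 x

lemma fisher_inv (ξ : ℝ) (hξ : 0 < ξ) :
    (fisherGPD ξ 1)⁻¹ = !![(ξ+1)^2, -(ξ+1); -(ξ+1), 2*(ξ+1)] := by
  have h1 : (2*ξ+1) ≠ 0 := by nlinarith
  have h2 : (ξ+1) ≠ 0 := by nlinarith
  apply Matrix.inv_eq_left_inv
  ext i j
  fin_cases i <;> fin_cases j <;>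
    simp [fisherGPD, Matrix.mul_apply, Fin.sum_univ_two] <;>
    field_simp <;> ring

lemma mleIF0_eq (ξ : ℝ) (hξ : 0 < ξ) (x : ℝ) :
    mleIF ξ x 0 = (ξ+1)^2/ξ^2 * Real.log (1+ξ*x)
      + ((ξ+1) - ((ξ+1)^3/ξ + (ξ+1)^2) * (x/(1+ξ*x))) := by
  simp [mleIF, fisher_inv ξ hξ, gpdScores, Matrix.mulVec, dotProduct,
    Fin.sum_univ_two]
  ring

lemma mleIF1_eq (ξ : ℝ) (hξ : 0 < ξ) (x : ℝ) :
    mleIF ξ x 1 = -(ξ+1)/ξ^2 * Real.log (1+ξ*x)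
      + (-(2*(ξ+1)) + ((ξ+1)^2/ξ + 2*(ξ+1)^2) * (x/(1+ξ*x))) := by
  simp [mleIF, fisher_inv ξ hξ, gpdScores, Matrix.mulVec, dotProduct,
    Fin.sum_univ_two]
  ring

lemma w_tendsto (ξ : ℝ) (hξ : 0 < ξ) :
    Tendsto (fun x : ℝ => x/(1+ξ*x)) atTop (nhds (1/ξ)) := by
  have h : Tendsto (fun x : ℝ => 1/x + ξ) atTop (nhds ξ) := by
    simpa using (tendsto_inv_atTop_zero.add tendsto_const_nhds :
      Tendsto (fun x:ℝ => x⁻¹ + ξ) atTop (nhds (0+ξ)))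
  have h2 := h.inv₀ hξ.ne'
  rw [show (1:ℝ)/ξ = ξ⁻¹ by simp]
  refine h2.congr' ?_
  filter_upwards [eventually_gt_atTop (0:ℝ)] with x hx
  have hx' : x ≠ 0 := hx.ne'
  have : (1+ξ*x) ≠ 0 := by positivity
  field_simp

lemma loginv_tendsto : Tendsto (fun x : ℝ => (Real.log x)⁻¹) atTop (nhds 0) :=
  Real.tendsto_log_atTop.inv_tendsto_atTop

lemma logratio_tendsto (ξ : ℝ) (hξ : 0 < ξ) :
    Tendsto (fun x : ℝ => Real.log (1+ξ*x) / Real.log x) atTop (nhds 1) := by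
  have hl : Tendsto (fun x : ℝ => Real.log (1/x + ξ)) atTop (nhds (Real.log ξ)) := by
    have h : Tendsto (fun x : ℝ => 1/x + ξ) atTop (nhds ξ) := by
      simpa using (tendsto_inv_atTop_zero.add tendsto_const_nhds :
        Tendsto (fun x:ℝ => x⁻¹ + ξ) atTop (nhds (0+ξ)))
    exact (Real.continuousAt_log hξ.ne').tendsto.comp h
  have h2 : Tendsto (fun x : ℝ => 1 + Real.log (1/x + ξ) * (Real.log x)⁻¹) atTop
      (nhds (1 + Real.log ξ * 0)) :=
    tendsto_const_nhds.add (hl.mul loginv_tendsto)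
  have h3 : (fun x : ℝ => Real.log (1+ξ*x) / Real.log x) =ᶠ[atTop]
      (fun x : ℝ => 1 + Real.log (1/x + ξ) * (Real.log x)⁻¹) := by
    filter_upwards [eventually_gt_atTop (1:ℝ)] with x hx
    have hx0 : 0 < x := lt_trans one_pos hx
    have hlog : Real.log x ≠ 0 := (Real.log_pos hx).ne'
    have hpos : 0 < 1/x + ξ := by positivity
    have key : Real.log (1+ξ*x) = Real.log x + Real.log (1/x+ξ) := by
      rw [← Real.log_mul hx0.ne' hpos.ne']
      congr 1
      field_simp
    rw [key]
    field_simp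
  simpa using h2.congr' h3.symm

lemma t0 (ξ : ℝ) (hξ : 0 < ξ) :
    Tendsto (fun x => mleIF ξ x 0 / Real.log x) atTop (nhds ((ξ + 1) ^ 2 / ξ ^ 2)) := by
  have H : Tendsto (fun x : ℝ =>
      (ξ+1)^2/ξ^2 * (Real.log (1+ξ*x)/Real.log x)
        + ((ξ+1) - ((ξ+1)^3/ξ + (ξ+1)^2) * (x/(1+ξ*x))) * (Real.log x)⁻¹) atTop
      (nhds ((ξ+1)^2/ξ^2 * 1 + ((ξ+1) - ((ξ+1)^3/ξ + (ξ+1)^2) * (1/ξ)) * 0)) :=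
    (tendsto_const_nhds.mul (logratio_tendsto ξ hξ)).add
      ((tendsto_const_nhds.sub (tendsto_const_nhds.mul (w_tendsto ξ hξ))).mul loginv_tendsto)
  have H2 := H.congr (fun x => show _ = mleIF ξ x 0 / Real.log x by
    rw [mleIF0_eq ξ hξ x]; ring)
  simpa using H2

lemma t1 (ξ : ℝ) (hξ : 0 < ξ) :
    Tendsto (fun x => mleIF ξ x 1 / Real.log x) atTop (nhds (-(ξ + 1) / ξ ^ 2)) := by
  have H : Tendsto (fun x : ℝ =>
      -(ξ+1)/ξ^2 * (Real.log (1+ξ*x)/Real.log x)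
        + (-(2*(ξ+1)) + ((ξ+1)^2/ξ + 2*(ξ+1)^2) * (x/(1+ξ*x))) * (Real.log x)⁻¹) atTop
      (nhds (-(ξ+1)/ξ^2 * 1 + (-(2*(ξ+1)) + ((ξ+1)^2/ξ + 2*(ξ+1)^2) * (1/ξ)) * 0)) :=
    (tendsto_const_nhds.mul (logratio_tendsto ξ hξ)).add
      ((tendsto_const_nhds.add (tendsto_const_nhds.mul (w_tendsto ξ hξ))).mul loginv_tendsto)
  have H2 := H.congr (fun x => show _ = mleIF ξ x 1 / Real.log x by
    rw [mleIF1_eq ξ hξ x]; ring)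
  simpa using H2

/-- Both components of the MLE influence function are unbounded, growing at logarithmic
rate: the first component divided by log x tends to (ξ+1)²/ξ², the second to −(ξ+1)/ξ²;
in particular the supremum of the Euclidean norm over x>0 is infinite. -/
theorem gpd_mle_if_unbounded (ξ : ℝ) (hξ : 0 < ξ) :
    Tendsto (fun x => mleIF ξ x 0 / Real.log x) atTop (nhds ((ξ + 1) ^ 2 / ξ ^ 2)) ∧
    Tendsto (fun x => mleIF ξ x 1 / Real.log x) atTop (nhds (-(ξ + 1) / ξ ^ 2)) ∧
    (∀ C : ℝ, ∃ x : ℝ, 0 < x ∧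
      C < Real.sqrt ((mleIF ξ x 0) ^ 2 + (mleIF ξ x 1) ^ 2)) := by
  refine ⟨t0 ξ hξ, t1 ξ hξ, fun C => ?_⟩
  have hpos : 0 < (ξ + 1) ^ 2 / ξ ^ 2 := by positivity
  have hmul : Tendsto (fun x => (mleIF ξ x 0 / Real.log x) * Real.log x) atTop atTop :=
    Tendsto.pos_mul_atTop hpos (t0 ξ hξ) Real.tendsto_log_atTop
  have hIF : Tendsto (fun x => mleIF ξ x 0) atTop atTop := by
    refine hmul.congr' ?_
    filter_upwards [eventually_gt_atTop (1:ℝ)] with x hx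
    exact div_mul_cancel₀ _ (Real.log_pos hx).ne'
  obtain ⟨x, hx1, hxC⟩ := ((eventually_gt_atTop (1:ℝ)).and
    (hIF.eventually_gt_atTop C)).exists
  refine ⟨x, lt_trans one_pos hx1, lt_of_lt_of_le hxC ?_⟩
  calc mleIF ξ x 0 ≤ |mleIF ξ x 0| := le_abs_self _
    _ = Real.sqrt ((mleIF ξ x 0)^2) := (Real.sqrt_sq_eq_abs _).symm
    _ ≤ Real.sqrt ((mleIF ξ x 0)^2 + (mleIF ξ x 1)^2) :=
        Real.sqrt_le_sqrt (by nlinarith [sq_nonneg (mleIF ξ x 1)])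
end

section
/- For all integers 1 ≤ k ≤ n and every integer L ≥ 1, if B_{k,n} has the Beta(k, n−k+1) distribution, then E[−log B_{k,n}] ≥ Σ_{l=1}^{L} (1/l) · ∏_{j=1}^{l} (n+j−k)/(n+j). -/
open MeasureTheory Real Set

/-- Density of the Beta(k, n−k+1) distribution. -/
noncomputable def betaOrderDensity (k n : ℕ) (x : ℝ) : ℝ :=
  ((Nat.factorial n : ℝ) / ((Nat.factorial (k - 1) : ℝ) * (Nat.factorial (n - k) : ℝ)))
    * x ^ (k - 1) * (1 - x) ^ (n - k)

/-! Integrating `-log x ≥ ∑_{l ≤ L} (1 - x)^l / l` against the Beta density reduces the claim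
to the moments `E[(1 - B_{k,n})^l]`, and the Euler Beta integral
`∫₀¹ x^a (1 - x)^b dx = a! b! / (a + b + 1)!` evaluates these as the stated products. -/

open scoped Nat

theorem sum_Icc_one_sub_pow_div_le_neg_log {x : ℝ} (hx₀ : 0 < x) (hx₁ : x ≤ 1) (L : ℕ) :
    ∑ l ∈ Finset.Icc 1 L, (1 - x) ^ l / l ≤ -log x := by
  have hsum := hasSum_pow_div_log_of_abs_lt_one (x := 1 - x)
    (by rw [abs_lt]; constructor <;> linarith)
  rw [sub_sub_cancel] at hsum
  have hterm : ∀ i : ℕ, 0 ≤ (1 - x) ^ (i + 1) / (i + 1) := fun i =>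
    div_nonneg (pow_nonneg (sub_nonneg.2 hx₁) _) i.cast_add_one_pos.le
  calc ∑ l ∈ Finset.Icc 1 L, (1 - x) ^ l / l
    _ = ∑ i ∈ Finset.range L, (1 - x) ^ (i + 1) / (i + 1) := by
      rw [← Finset.Ico_add_one_right_eq_Icc, Finset.sum_Ico_eq_sum_range, add_tsub_cancel_right]
      refine Finset.sum_congr rfl fun i _ => ?_
      push_cast
      rw [add_comm 1 i, add_comm 1 (i : ℝ)]
    _ ≤ -log x := sum_le_hasSum _ (fun i _ => hterm i) hsum

theorem sum_integral_one_sub_pow_div_le_integral_neg_log_mul {w : ℝ → ℝ}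
    (hw : ContinuousOn w (Icc 0 1)) (hw₀ : ∀ x ∈ Ioo (0 : ℝ) 1, 0 ≤ w x) (L : ℕ) :
    ∑ l ∈ Finset.Icc 1 L, (∫ x in (0 : ℝ)..1, (1 - x) ^ l * w x) / l ≤
      ∫ x in (0 : ℝ)..1, -log x * w x := by
  have hw' : ContinuousOn w (uIcc 0 1) := by rwa [uIcc_of_le zero_le_one]
  have hint : ∀ l : ℕ, IntervalIntegrable (fun x => (1 - x) ^ l * w x / l) volume 0 1 :=
    fun l => ContinuousOn.intervalIntegrable (by fun_prop)
  simp_rw [← intervalIntegral.integral_div,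
    ← intervalIntegral.integral_finsetSum fun l _ => hint l]
  refine intervalIntegral.integral_mono_on_of_le_Ioo zero_le_one
    (ContinuousOn.intervalIntegrable (by fun_prop))
    (intervalIntegral.intervalIntegrable_log'.neg.mul_continuousOn hw') fun x hx => ?_
  calc ∑ l ∈ Finset.Icc 1 L, (1 - x) ^ l * w x / l
    _ = (∑ l ∈ Finset.Icc 1 L, (1 - x) ^ l / l) * w x := by
      rw [Finset.sum_mul]; simp_rw [mul_div_right_comm]
    _ ≤ -log x * w x :=
      mul_le_mul_of_nonneg_right (sum_Icc_one_sub_pow_div_le_neg_log hx.1 hx.2.le L) (hw₀ x hx)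

theorem integral_pow_mul_one_sub_pow (a b : ℕ) :
    ∫ x in (0 : ℝ)..1, x ^ a * (1 - x) ^ b = (a ! * b ! : ℝ) / (a + b + 1)! := by
  have h := Complex.betaIntegral_eval_nat_add_one_right (u := a + 1)
    (by norm_cast; positivity) b
  have hprod : ∏ j ∈ Finset.range (b + 1), ((a : ℂ) + 1 + j) =
      ((a + 1).ascFactorial (b + 1) : ℕ) := by
    rw [Nat.ascFactorial_eq_prod_range]
    push_cast
    rfl
  rw [Complex.betaIntegral, hprod] at h
  apply Complex.ofReal_injective
  rw [← intervalIntegral.integral_ofReal, add_assoc, ← Nat.factorial_mul_ascFactorial a (b + 1)]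
  convert h using 1
  · congr 1 with x
    simp [← Complex.cpow_natCast]
  · push_cast
    exact mul_div_mul_left _ _ (mod_cast a.factorial_ne_zero)

theorem prod_Icc_add_div_add (m n l : ℕ) :
    ∏ j ∈ Finset.Icc 1 l, ((m : ℝ) + j) / (n + j) =
      ((m + l)! * n ! : ℝ) / (m ! * (n + l)!) := by
  induction l with
  | zero => simp [div_self (by positivity : (m ! * n ! : ℝ) ≠ 0)]
  | succ l ih =>
    rw [Finset.prod_Icc_succ_top (by omega), ih, ← add_assoc, ← add_assoc,
      Nat.factorial_succ (m + l), Nat.factorial_succ (n + l)]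
    push_cast
    field_simp
    ring

theorem continuous_betaOrderDensity (k n : ℕ) : Continuous (betaOrderDensity k n) := by
  unfold betaOrderDensity; fun_prop

theorem betaOrderDensity_nonneg (k n : ℕ) {x : ℝ} (hx₀ : 0 ≤ x) (hx₁ : x ≤ 1) :
    0 ≤ betaOrderDensity k n x := by
  unfold betaOrderDensity; positivity

theorem integral_one_sub_pow_mul_betaOrderDensity {k n : ℕ} (hk : 1 ≤ k) (hkn : k ≤ n)
    (l : ℕ) :
    ∫ x in (0 : ℝ)..1, (1 - x) ^ l * betaOrderDensity k n x =
      ∏ j ∈ Finset.Icc 1 l, ((n - k : ℕ) + j : ℝ) / (n + j) := by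
  have hexp : k - 1 + (n - k + l) + 1 = n + l := by omega
  have hintegrand : ∀ x : ℝ, (1 - x) ^ l * betaOrderDensity k n x =
      (n ! : ℝ) / ((k - 1)! * (n - k)!) * (x ^ (k - 1) * (1 - x) ^ (n - k + l)) := fun x => by
    rw [betaOrderDensity, pow_add]; ring
  simp_rw [hintegrand]
  rw [intervalIntegral.integral_const_mul, integral_pow_mul_one_sub_pow, hexp,
    prod_Icc_add_div_add]
  field_simp

theorem beta_neg_log_lower_bound_general (k n L : ℕ) (hk : 1 ≤ k) (hkn : k ≤ n) :
    (∑ l ∈ Finset.Icc 1 L, (1 / (l : ℝ)) *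
        ∏ j ∈ Finset.Icc 1 l, ((n : ℝ) + j - k) / ((n : ℝ) + j))
      ≤ ∫ x in Ioo (0 : ℝ) 1, (-Real.log x) * betaOrderDensity k n x := by
  have hmoment : ∀ l : ℕ, ∏ j ∈ Finset.Icc 1 l, ((n : ℝ) + j - k) / ((n : ℝ) + j) =
      ∫ x in (0 : ℝ)..1, (1 - x) ^ l * betaOrderDensity k n x := fun l => by
    rw [integral_one_sub_pow_mul_betaOrderDensity hk hkn]
    refine Finset.prod_congr rfl fun j _ => ?_
    push_cast [Nat.cast_sub hkn]
    ring
  rw [← integral_Ioc_eq_integral_Ioo, ← intervalIntegral.integral_of_le zero_le_one]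
  simp_rw [hmoment, one_div_mul_eq_div]
  exact sum_integral_one_sub_pow_div_le_integral_neg_log_mul
    (continuous_betaOrderDensity k n).continuousOn
    (fun x hx => betaOrderDensity_nonneg k n hx.1.le hx.2.le) L

/-- For B_{k,n} ∼ Beta(k, n−k+1) and every L ≥ 1,
E[−log B_{k,n}] ≥ Σ_{l=1}^{L} (1/l) ∏_{j=1}^{l} (n+j−k)/(n+j). -/
theorem beta_neg_log_lower_bound (k n L : ℕ) (hk : 1 ≤ k) (hkn : k ≤ n) (hL : 1 ≤ L) :
    (∑ l ∈ Finset.Icc 1 L, (1 / (l : ℝ)) *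
        ∏ j ∈ Finset.Icc 1 l, ((n : ℝ) + j - k) / ((n : ℝ) + j))
      ≤ ∫ x in Ioo (0 : ℝ) 1, (-Real.log x) * betaOrderDensity k n x :=
  beta_neg_log_lower_bound_general k n L hk hkn
end

section
/- For every shape ξ>0, scale β>0 and every k>0, let m = β(2^ξ − 1)/ξ be the median of GPD(ξ,β) and extend its c.d.f. by F_{ξ,β}(x) = 0 for x < 0. Then there exists a unique M > 0 such that F_{ξ,β}(m + kM) − F_{ξ,β}(m − M) = 1/2; i.e., the population kMAD of GPD(ξ,β) is well defined as the unique root of this equation. -/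
/-!
On `[0, ∞)` a GPD c.d.f. is continuous and strictly increasing, and it vanishes on `(-∞, 0]`,
so it is monotone on all of `ℝ`. Hence `M ↦ F(m + kM) - F(m - M)` is strictly increasing on
`[0, ∞)`, which gives uniqueness; it is continuous on `[0, m]`, where it runs from `0` to
`F(m + km) - F(0) > F(m)`, so the intermediate value theorem gives a root of
`F(m + kM) - F(m - M) = F(m) = 1/2`.
-/

open Real

/-- C.d.f. of the generalized Pareto distribution GPD(ξ,β), threshold μ = 0,
extended by 0 for x < 0. -/
noncomputable def gpdCDF (ξ β x : ℝ) : ℝ :=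
  if x < 0 then 0 else 1 - (1 + ξ * x / β) ^ (-1 / ξ)

open Set

section kMAD

variable {F : ℝ → ℝ}

theorem monotone_of_strictMonoOn_Ici_of_eq_zero (hzero : ∀ x ≤ 0, F x = 0)
    (hmono : StrictMonoOn F (Ici 0)) : Monotone F := by
  intro x y hxy
  rcases le_total y 0 with hy | hy
  · rw [hzero x (hxy.trans hy), hzero y hy]
  rcases le_total x 0 with hx | hx
  · rw [hzero x hx, ← hzero 0 le_rfl]
    exact hmono.monotoneOn self_mem_Ici hy hy
  · exact hmono.monotoneOn hx hy hxy

theorem strictMonoOn_kMAD_deviation (hzero : ∀ x ≤ 0, F x = 0)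
    (hmono : StrictMonoOn F (Ici 0)) {m k : ℝ} (hm : 0 ≤ m) (hk : 0 < k) :
    StrictMonoOn (fun M => F (m + k * M) - F (m - M)) (Ici 0) := by
  intro a (ha : 0 ≤ a) b (hb : 0 ≤ b) hab
  have hright : F (m + k * a) < F (m + k * b) :=
    hmono (show 0 ≤ m + k * a by positivity) (show 0 ≤ m + k * b by positivity)
      (by gcongr)
  have hleft : F (m - b) ≤ F (m - a) :=
    monotone_of_strictMonoOn_Ici_of_eq_zero hzero hmono (by linarith)
  dsimp only
  linarith

theorem existsUnique_kMAD_of_strictMonoOn_Ici (hzero : ∀ x ≤ 0, F x = 0)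
    (hmono : StrictMonoOn F (Ici 0)) (hcont : ContinuousOn F (Ici 0)) {m k : ℝ}
    (hm : 0 < m) (hk : 0 < k) :
    ∃! M : ℝ, 0 < M ∧ F (m + k * M) - F (m - M) = F m := by
  set g : ℝ → ℝ := fun M => F (m + k * M) - F (m - M)
  have hg_mono : StrictMonoOn g (Ici 0) := strictMonoOn_kMAD_deviation hzero hmono hm.le hk
  have hg_cont : ContinuousOn g (Icc 0 m) := by
    refine ContinuousOn.sub (hcont.comp (by fun_prop) ?_) (hcont.comp (by fun_prop) ?_)
    · intro M (hM : 0 ≤ M ∧ M ≤ m)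
      show 0 ≤ m + k * M
      nlinarith
    · intro M (hM : 0 ≤ M ∧ M ≤ m)
      show 0 ≤ m - M
      linarith
  have hF0 : F 0 = 0 := hzero 0 le_rfl
  have hFm_pos : 0 < F m := hF0 ▸ hmono self_mem_Ici hm.le hm
  have hg0 : g 0 = 0 := by simp [g]
  have hgm : F m < g m := by
    have : F m < F (m + k * m) := hmono hm.le (show 0 ≤ m + k * m by positivity) (by nlinarith)
    simp only [g, sub_self, hF0]
    linarith
  obtain ⟨M, hM, hgM⟩ : F m ∈ g '' Ioo 0 m :=
    intermediate_value_Ioo hm.le hg_cont ⟨by rwa [hg0], hgm⟩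
  refine ⟨M, ⟨hM.1, hgM⟩, fun M' ⟨hM', hgM'⟩ => ?_⟩
  exact hg_mono.injOn (mem_Ici.2 hM'.le) (mem_Ici.2 hM.1.le) (hgM'.trans hgM.symm)

end kMAD

section GPD

variable {ξ β : ℝ}

noncomputable def gpdMedian (ξ β : ℝ) : ℝ := β * ((2 : ℝ) ^ ξ - 1) / ξ

theorem gpdMedian_pos (hξ : 0 < ξ) (hβ : 0 < β) : 0 < gpdMedian ξ β := by
  have : 0 < (2 : ℝ) ^ ξ - 1 := sub_pos.2 (one_lt_rpow one_lt_two hξ)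
  unfold gpdMedian
  positivity

theorem one_le_gpd_base (hξ : 0 ≤ ξ) (hβ : 0 ≤ β) {x : ℝ} (hx : 0 ≤ x) :
    1 ≤ 1 + ξ * x / β :=
  le_add_of_nonneg_right (by positivity)

theorem gpdCDF_of_nonneg {x : ℝ} (hx : 0 ≤ x) :
    gpdCDF ξ β x = 1 - (1 + ξ * x / β) ^ (-1 / ξ) :=
  if_neg hx.not_gt

theorem gpdCDF_eq_zero_of_nonpos {x : ℝ} (hx : x ≤ 0) : gpdCDF ξ β x = 0 := by
  rcases hx.lt_or_eq with hx | rfl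
  · exact if_pos hx
  · simp [gpdCDF_of_nonneg]

theorem gpdCDF_strictMonoOn (hξ : 0 < ξ) (hβ : 0 < β) : StrictMonoOn (gpdCDF ξ β) (Ici 0) := by
  intro x (hx : 0 ≤ x) y (hy : 0 ≤ y) hxy
  rw [gpdCDF_of_nonneg hx, gpdCDF_of_nonneg hy, sub_lt_sub_iff_left]
  refine rpow_lt_rpow_of_neg ?_ (by gcongr) (div_neg_of_neg_of_pos (by norm_num) hξ)
  linarith [one_le_gpd_base hξ.le hβ.le hx]

theorem gpdCDF_continuousOn (hξ : 0 ≤ ξ) (hβ : 0 ≤ β) : ContinuousOn (gpdCDF ξ β) (Ici 0) := by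
  refine ContinuousOn.congr (f := fun x => 1 - (1 + ξ * x / β) ^ (-1 / ξ)) ?_
    fun x hx => gpdCDF_of_nonneg hx
  refine continuousOn_const.sub (ContinuousOn.rpow_const (by fun_prop) fun x hx => Or.inl ?_)
  linarith [one_le_gpd_base hξ hβ (mem_Ici.1 hx)]

theorem gpdCDF_gpdMedian (hξ : 0 < ξ) (hβ : 0 < β) : gpdCDF ξ β (gpdMedian ξ β) = 1 / 2 := by
  have hbase : 1 + ξ * gpdMedian ξ β / β = (2 : ℝ) ^ ξ := by
    unfold gpdMedian
    field_simp
    ring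
  rw [gpdCDF_of_nonneg (gpdMedian_pos hξ hβ).le, hbase, ← rpow_mul zero_le_two,
    mul_div_cancel₀ _ hξ.ne', rpow_neg_one]
  norm_num

end GPD

/-- For every ξ>0, β>0 and k>0, with m = β(2^ξ−1)/ξ the median of GPD(ξ,β), there is a
unique M>0 with F(m+kM) − F(m−M) = 1/2: the population kMAD is well defined. -/
theorem gpd_kMAD_exists_unique (ξ β k : ℝ) (hξ : 0 < ξ) (hβ : 0 < β) (hk : 0 < k) :
    ∃! M : ℝ, 0 < M ∧
      gpdCDF ξ β (β * ((2 : ℝ) ^ ξ - 1) / ξ + k * M)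
        - gpdCDF ξ β (β * ((2 : ℝ) ^ ξ - 1) / ξ - M) = 1 / 2 := by
  have h := existsUnique_kMAD_of_strictMonoOn_Ici (fun _ => gpdCDF_eq_zero_of_nonpos)
    (gpdCDF_strictMonoOn hξ hβ) (gpdCDF_continuousOn hξ.le hβ.le) (gpdMedian_pos hξ hβ) hk
  rwa [gpdCDF_gpdMedian hξ hβ] at h
end
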